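/- (Phase transition, negative-mean phase.) Let (X_n)_{n∈ℤ} be a stationary and ergodic integer-valued sequence with E[|X_0|] < ∞ and E[X_0] < 0. Then almost surely, for every i ∈ ℤ the record component C(i) = {j ∈ ℤ : R_X^a(j) = R_X^b(i) for some a, b ≥ 0} is finite. -/

import Mathlib

attribute [local instance] Classical.propDecidable

/-- The record map of an integer sequence: `n` is sent to the least integer `j > n`
with `∑_{l=n}^{j-1} x l ≥ 0` if such `j` exists, and to `n` otherwise. -/
noncomputable def recordMap (x : ℤ → ℤ) (n : ℤ) : ℤ :=
  if ∃ j : ℤ, n < j ∧ 0 ≤ ∑ l ∈ Finset.Ico n j, x l then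
    sInf {j : ℤ | n < j ∧ 0 ≤ ∑ l ∈ Finset.Ico n j, x l}
  else n

open MeasureTheory ProbabilityTheory

set_option linter.all false
set_option maxHeartbeats 1000000



lemma sum_Ico_split {M : Type*} [AddCommMonoid M] (x : ℤ → M) {a b c : ℤ}
    (hab : a ≤ b) (hbc : b ≤ c) :
    ∑ l ∈ Finset.Ico a b, x l + ∑ l ∈ Finset.Ico b c, x l = ∑ l ∈ Finset.Ico a c, x l := by
  rw [← Finset.Ico_union_Ico_eq_Ico hab hbc,
    Finset.sum_union (Finset.Ico_disjoint_Ico_consecutive a b c)]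

lemma recordMap_eq_or (x : ℤ → ℤ) (n : ℤ) :
    recordMap x n = n ∨
      (n < recordMap x n ∧ 0 ≤ ∑ l ∈ Finset.Ico n (recordMap x n), x l) := by
  unfold recordMap
  split
  · rename_i h
    right
    have hne : {j : ℤ | n < j ∧ 0 ≤ ∑ l ∈ Finset.Ico n j, x l}.Nonempty := h
    have hbdd : BddBelow {j : ℤ | n < j ∧ 0 ≤ ∑ l ∈ Finset.Ico n j, x l} :=
      ⟨n, fun j hj => le_of_lt hj.1⟩
    exact Int.csInf_mem hne hbdd
  · left; rfl

lemma self_le_recordMap (x : ℤ → ℤ) (n : ℤ) : n ≤ recordMap x n := by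
  rcases recordMap_eq_or x n with h | h
  · omega
  · omega

lemma iterate_recordMap_spec (x : ℤ → ℤ) (n : ℤ) :
    ∀ a : ℕ, n ≤ (recordMap x)^[a] n ∧
      0 ≤ ∑ l ∈ Finset.Ico n ((recordMap x)^[a] n), x l := by
  intro a
  induction a with
  | zero => simp
  | succ a ih =>
    rw [Function.iterate_succ_apply']
    set m := (recordMap x)^[a] n with hm
    rcases recordMap_eq_or x m with h | h
    · rw [h]; exact ih
    · refine ⟨le_trans ih.1 (le_of_lt h.1), ?_⟩
      rw [← sum_Ico_split x ih.1 h.1.le]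
      exact add_nonneg ih.2 h.2

lemma exists_recordMap_fixed (x : ℤ → ℤ) (n : ℤ)
    (hfin : {j : ℤ | n < j ∧ 0 ≤ ∑ l ∈ Finset.Ico n j, x l}.Finite) :
    ∃ a : ℕ, recordMap x ((recordMap x)^[a] n) = (recordMap x)^[a] n := by
  by_contra hc
  push_neg at hc
  have hlt : ∀ a : ℕ, (recordMap x)^[a] n < (recordMap x)^[a+1] n := by
    intro a
    rw [Function.iterate_succ_apply']
    exact lt_of_le_of_ne (self_le_recordMap x _) (Ne.symm (hc a))
  have hsm : StrictMono (fun a : ℕ => (recordMap x)^[a+1] n) :=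
    strictMono_nat_of_lt_succ (fun a => hlt (a+1))
  have hmem : ∀ a : ℕ, (recordMap x)^[a+1] n ∈
      {j : ℤ | n < j ∧ 0 ≤ ∑ l ∈ Finset.Ico n j, x l} := by
    intro a
    refine ⟨lt_of_lt_of_le ?_ (hsm.monotone (Nat.zero_le a)), (iterate_recordMap_spec x n (a+1)).2⟩
    simpa using hlt 0
  exact (Set.infinite_of_injective_forall_mem hsm.injective hmem) hfin

lemma component_finite (x : ℤ → ℤ) (i : ℤ)
    (hfwd : {j : ℤ | i < j ∧ 0 ≤ ∑ l ∈ Finset.Ico i j, x l}.Finite)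
    (hbwd : ∀ p : ℤ, {j : ℤ | j < p ∧ 0 ≤ ∑ l ∈ Finset.Ico j p, x l}.Finite) :
    {j : ℤ | ∃ a b : ℕ, (recordMap x)^[a] j = (recordMap x)^[b] i}.Finite := by
  obtain ⟨a₀, hfix⟩ := exists_recordMap_fixed x i hfwd
  set p := (recordMap x)^[a₀] i with hp
  have hstab : ∀ b : ℕ, (recordMap x)^[a₀ + b] i = p := by
    intro b
    induction b with
    | zero => rfl
    | succ b ih =>
      have : a₀ + (b+1) = (a₀ + b) + 1 := by omega
      rw [this, Function.iterate_succ_apply', ih]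
      exact hfix
  have hsub : {j : ℤ | ∃ a b : ℕ, (recordMap x)^[a] j = (recordMap x)^[b] i} ⊆
      insert p {j : ℤ | j < p ∧ 0 ≤ ∑ l ∈ Finset.Ico j p, x l} := by
    intro j hj
    obtain ⟨a, b, hab⟩ := hj
    have h1 : (recordMap x)^[a₀ + a] j = p := by
      rw [Function.iterate_add_apply, hab, ← Function.iterate_add_apply]
      exact hstab b
    have h2 := iterate_recordMap_spec x j (a₀ + a)
    rw [h1] at h2
    rcases eq_or_lt_of_le h2.1 with h | h
    · exact Or.inl h
    · exact Or.inr ⟨h, h2.2⟩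
  exact ((hbwd p).insert p).subset hsub


section MaxErg

variable {α : Type*} [MeasurableSpace α] {μ : Measure α} [IsProbabilityMeasure μ]
  (σ : α → α) (g : α → ℝ)

/-- Birkhoff sums. -/
noncomputable def bS (n : ℕ) (x : α) : ℝ := ∑ k ∈ Finset.range n, g (σ^[k] x)

/-- Running maxima of Birkhoff sums, starting from `bS 0 = 0`. -/
noncomputable def bM : ℕ → α → ℝ
  | 0, _ => 0
  | (N+1), x => max (bM N x) (bS σ g (N+1) x)

lemma bS_succ (n : ℕ) (x : α) : bS σ g (n+1) x = g x + bS σ g n (σ x) := by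
  unfold bS
  rw [Finset.sum_range_succ']
  simp only [Function.iterate_succ_apply, Function.iterate_zero_apply]
  rw [add_comm]

lemma bM_nonneg (N : ℕ) (x : α) : 0 ≤ bM σ g N x := by
  induction N with
  | zero => simp [bM]
  | succ N ih => exact le_trans ih (le_max_left _ _)

lemma bS_le_bM {n N : ℕ} (h : n ≤ N) (x : α) : bS σ g n x ≤ bM σ g N x := by
  induction N with
  | zero =>
    have : n = 0 := by omega
    simp [this, bS, bM]
  | succ N ih =>
    rcases Nat.lt_or_ge n (N+1) with h' | h'
    · exact le_trans (ih (by omega)) (le_max_left _ _)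
    · have : n = N + 1 := by omega
      rw [this]; exact le_max_right _ _
lemma bM_le {N : ℕ} {x : α} {c : ℝ} (h : ∀ n ≤ N, bS σ g n x ≤ c) : bM σ g N x ≤ c := by
  induction N with
  | zero =>
    have := h 0 (le_refl _)
    simpa [bM, bS] using this
  | succ N ih =>
    exact max_le (ih (fun n hn => h n (by omega))) (h (N+1) (le_refl _))

lemma bS_measurable (hσ : Measurable σ) (hg : Measurable g) (n : ℕ) :
    Measurable (bS σ g n) :=
  Finset.measurable_sum _ (fun k _ => hg.comp (hσ.iterate k))

lemma bM_measurable (hσ : Measurable σ) (hg : Measurable g) (N : ℕ) :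
    Measurable (bM σ g N) := by
  induction N with
  | zero => exact measurable_const
  | succ N ih => exact Measurable.max ih (bS_measurable σ g hσ hg (N+1))

lemma bS_integrable (hσ : Measurable σ) (hσp : MeasurePreserving σ μ μ)
    (hg : Measurable g) (hgi : Integrable g μ) (n : ℕ) :
    Integrable (bS σ g n) μ := by
  apply integrable_finset_sum
  intro k _
  exact ((hσp.iterate k).integrable_comp hgi.aestronglyMeasurable).mpr hgi

lemma bM_integrable (hσ : Measurable σ) (hσp : MeasurePreserving σ μ μ)
    (hg : Measurable g) (hgi : Integrable g μ) (N : ℕ) :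
    Integrable (bM σ g N) μ := by
  induction N with
  | zero => exact integrable_const 0
  | succ N ih => exact ih.sup (bS_integrable σ g hσ hσp hg hgi (N+1))

/-- Garsia's maximal ergodic inequality at level `N`. -/
lemma maximal_ergodic_N (hσ : Measurable σ) (hσp : MeasurePreserving σ μ μ)
    (hg : Measurable g) (hgi : Integrable g μ) (N : ℕ) :
    0 ≤ ∫ x in {x | ∃ n, 1 ≤ n ∧ n ≤ N ∧ 0 ≤ bS σ g n x}, g x ∂μ := by
  set A : Set α := {x | ∃ n, 1 ≤ n ∧ n ≤ N ∧ 0 ≤ bS σ g n x} with hA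
  have hAm : MeasurableSet A := by
    have : A = ⋃ n ∈ Finset.Icc 1 N, {x | 0 ≤ bS σ g n x} := by
      ext x
      simp only [Set.mem_iUnion, Finset.mem_Icc, Set.mem_setOf_eq, hA]
      constructor
      · rintro ⟨n, h1, h2, h3⟩; exact ⟨n, ⟨h1, h2⟩, h3⟩
      · rintro ⟨n, ⟨h1, h2⟩, h3⟩; exact ⟨n, h1, h2, h3⟩
    rw [this]
    exact MeasurableSet.biUnion (Finset.Icc 1 N).countable_toSet
      (fun n _ => measurableSet_le measurable_const (bS_measurable σ g hσ hg n))
  set h : α → ℝ := fun x => bM σ g N x - bM σ g N (σ x) with hh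
  have hbMσ : Integrable (fun x => bM σ g N (σ x)) μ :=
    (hσp.integrable_comp (bM_integrable σ g hσ hσp hg hgi N).aestronglyMeasurable).mpr
      (bM_integrable σ g hσ hσp hg hgi N)
  have hhint : Integrable h μ := (bM_integrable σ g hσ hσp hg hgi N).sub hbMσ
  -- pointwise bounds
  have key1 : ∀ x ∈ A, h x ≤ g x := by
    intro x hx
    obtain ⟨n₀, hn₀1, hn₀N, hn₀⟩ := hx
    have hub : ∀ n ≤ N, bS σ g n x ≤ g x + bM σ g N (σ x) := by
      intro n hn
      rcases Nat.eq_zero_or_pos n with rfl | hpos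
      · have : bS σ g 0 x = 0 := by simp [bS]
        rw [this]
        calc (0:ℝ) ≤ bS σ g n₀ x := hn₀
          _ = g x + bS σ g (n₀ - 1) (σ x) := by
              have : n₀ = (n₀ - 1) + 1 := by omega
              rw [this, bS_succ]; congr 1 <;> omega
          _ ≤ g x + bM σ g N (σ x) := by
              have := bS_le_bM σ g (show n₀ - 1 ≤ N by omega) (σ x)
              linarith
      · have hn' : n = (n - 1) + 1 := by omega
        calc bS σ g n x = g x + bS σ g (n - 1) (σ x) := by
              rw [hn', bS_succ]; congr 1 <;> omega
          _ ≤ g x + bM σ g N (σ x) := by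
              have := bS_le_bM σ g (show n - 1 ≤ N by omega) (σ x)
              linarith
    have := bM_le σ g hub
    simp only [hh]
    linarith
  have key2 : ∀ x ∈ Aᶜ, h x ≤ 0 := by
    intro x hx
    simp only [Set.mem_compl_iff, hA, Set.mem_setOf_eq] at hx
    push_neg at hx
    have hMx : bM σ g N x ≤ 0 := by
      apply bM_le
      intro n hn
      rcases Nat.eq_zero_or_pos n with rfl | hpos
      · simp [bS]
      · exact le_of_lt (hx n hpos hn)
    have := bM_nonneg σ g N (σ x)
    simp only [hh]
    linarith
  -- integral of h is zero
  have hint0 : ∫ x, h x ∂μ = 0 := by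
    have : ∫ x, bM σ g N (σ x) ∂μ = ∫ x, bM σ g N x ∂μ := by
      have := integral_map hσ.aemeasurable
        (bM_measurable σ g hσ hg N).aestronglyMeasurable (μ := μ)
      rw [hσp.map_eq] at this
      exact this.symm
    rw [hh]
    rw [integral_sub (bM_integrable σ g hσ hσp hg hgi N) hbMσ, this, sub_self]
  have hsplit : ∫ x in A, h x ∂μ + ∫ x in Aᶜ, h x ∂μ = 0 := by
    rw [integral_add_compl hAm hhint, hint0]
  have hcompl : ∫ x in Aᶜ, h x ∂μ ≤ 0 := setIntegral_nonpos hAm.compl key2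
  have hAh : 0 ≤ ∫ x in A, h x ∂μ := by linarith
  calc (0:ℝ) ≤ ∫ x in A, h x ∂μ := hAh
    _ ≤ ∫ x in A, g x ∂μ :=
      setIntegral_mono_on hhint.integrableOn hgi.integrableOn hAm key1

/-- The maximal ergodic inequality. -/
lemma maximal_ergodic (hσ : Measurable σ) (hσp : MeasurePreserving σ μ μ)
    (hg : Measurable g) (hgi : Integrable g μ) :
    0 ≤ ∫ x in {x | ∃ n, 1 ≤ n ∧ 0 ≤ bS σ g n x}, g x ∂μ := by
  set A : ℕ → Set α := fun N => {x | ∃ n, 1 ≤ n ∧ n ≤ N ∧ 0 ≤ bS σ g n x} with hA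
  have hAm : ∀ N, MeasurableSet (A N) := by
    intro N
    have : A N = ⋃ n ∈ Finset.Icc 1 N, {x | 0 ≤ bS σ g n x} := by
      ext x
      simp only [Set.mem_iUnion, Finset.mem_Icc, Set.mem_setOf_eq, hA]
      constructor
      · rintro ⟨n, h1, h2, h3⟩; exact ⟨n, ⟨h1, h2⟩, h3⟩
      · rintro ⟨n, ⟨h1, h2⟩, h3⟩; exact ⟨n, h1, h2, h3⟩
    rw [this]
    exact MeasurableSet.biUnion (Finset.Icc 1 N).countable_toSet
      (fun n _ => measurableSet_le measurable_const (bS_measurable σ g hσ hg n))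
  have hmono : Monotone A := by
    intro N M hNM x hx
    obtain ⟨n, h1, h2, h3⟩ := hx
    exact ⟨n, h1, le_trans h2 hNM, h3⟩
  have hunion : {x | ∃ n, 1 ≤ n ∧ 0 ≤ bS σ g n x} = ⋃ N, A N := by
    ext x
    simp only [Set.mem_iUnion, Set.mem_setOf_eq, hA]
    constructor
    · rintro ⟨n, h1, h3⟩; exact ⟨n, n, h1, le_refl _, h3⟩
    · rintro ⟨N, n, h1, _, h3⟩; exact ⟨n, h1, h3⟩
  rw [hunion]
  have htend := tendsto_setIntegral_of_monotone hAm hmono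
    (hgi.integrableOn.mono_set (Set.subset_univ _))
  exact ge_of_tendsto' htend (fun N => maximal_ergodic_N σ g hσ hσp hg hgi N)

end MaxErg


section PathAux

/-- Forward shift on path space. -/
def shiftF : (ℤ → ℤ) → (ℤ → ℤ) := fun f n => f (n + 1)

/-- Backward shift on path space. -/
def shiftB : (ℤ → ℤ) → (ℤ → ℤ) := fun f n => f (n - 1)

lemma shiftF_measurable : Measurable shiftF :=
  measurable_pi_lambda _ (fun _ => measurable_pi_apply _)

lemma shiftB_measurable : Measurable shiftB :=
  measurable_pi_lambda _ (fun _ => measurable_pi_apply _)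

lemma shiftF_iterate (k : ℕ) (f : ℤ → ℤ) (n : ℤ) : (shiftF^[k] f) n = f (n + k) := by
  induction k generalizing f n with
  | zero => simp
  | succ k ih =>
    rw [Function.iterate_succ_apply, ih]
    show f ((n + k) + 1) = f (n + (k + 1))
    congr 1
    push_cast
    ring

lemma shiftB_iterate (k : ℕ) (f : ℤ → ℤ) (n : ℤ) : (shiftB^[k] f) n = f (n - k) := by
  induction k generalizing f n with
  | zero => simp
  | succ k ih =>
    rw [Function.iterate_succ_apply, ih]
    show f ((n - k) - 1) = f (n - (k + 1))
    congr 1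
    push_cast
    ring

lemma Ico_singleton (c : ℤ) : Finset.Ico c (c + 1) = {c} := by
  ext y
  simp only [Finset.mem_Ico, Finset.mem_singleton]
  omega

lemma sum_range_int (f : ℤ → ℤ) (m : ℕ) :
    ∑ k ∈ Finset.range m, f (k : ℤ) = ∑ l ∈ Finset.Ico (0 : ℤ) (m : ℤ), f l := by
  induction m with
  | zero => simp
  | succ m ih =>
    rw [Finset.sum_range_succ, ih]
    have h1 : ((m : ℤ) + 1) = ((m + 1 : ℕ) : ℤ) := by push_cast; ring
    rw [← h1, ← sum_Ico_split f (by positivity : (0:ℤ) ≤ (m:ℤ)) (by linarith : (m:ℤ) ≤ (m:ℤ) + 1),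
      Ico_singleton, Finset.sum_singleton]

lemma sum_range_int_neg (f : ℤ → ℤ) (m : ℕ) :
    ∑ k ∈ Finset.range m, f (-1 - (k : ℤ)) = ∑ l ∈ Finset.Ico (-(m : ℤ)) (0 : ℤ), f l := by
  induction m with
  | zero => simp
  | succ m ih =>
    rw [Finset.sum_range_succ, ih]
    have h1 : (-(((m : ℕ) + 1 : ℕ) : ℤ)) = (-(m:ℤ) - 1) := by push_cast; ring
    rw [h1, ← sum_Ico_split f (by linarith : (-(m:ℤ) - 1) ≤ -(m:ℤ)) (neg_nonpos.mpr (Int.natCast_nonneg m))]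
    have h2 : Finset.Ico (-(m:ℤ) - 1) (-(m:ℤ)) = {-(m:ℤ) - 1} := by
      ext y
      simp only [Finset.mem_Ico, Finset.mem_singleton]
      omega
    rw [h2, Finset.sum_singleton]
    have h3 : (-1 - (m:ℤ)) = (-(m:ℤ) - 1) := by ring
    rw [h3, add_comm]

lemma bS_shiftF (ε : ℝ) (m : ℕ) (f : ℤ → ℤ) :
    bS shiftF (fun f => ((f 0 : ℤ) : ℝ) + ε) m f
      = ((∑ l ∈ Finset.Ico (0 : ℤ) (m : ℤ), f l : ℤ) : ℝ) + m * ε := by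
  unfold bS
  have h : ∀ k ∈ Finset.range m,
      (((shiftF^[k] f) 0 : ℤ) : ℝ) + ε = ((f (k : ℤ) : ℤ) : ℝ) + ε := by
    intro k _
    rw [shiftF_iterate]
    norm_num
  rw [Finset.sum_congr rfl h, Finset.sum_add_distrib, Finset.sum_const, ← sum_range_int]
  push_cast
  simp [Finset.card_range, nsmul_eq_mul]

lemma bS_shiftB (ε : ℝ) (m : ℕ) (f : ℤ → ℤ) :
    bS shiftB (fun f => ((f (-1) : ℤ) : ℝ) + ε) m f
      = ((∑ l ∈ Finset.Ico (-(m : ℤ)) (0 : ℤ), f l : ℤ) : ℝ) + m * ε := by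
  unfold bS
  have h : ∀ k ∈ Finset.range m,
      (((shiftB^[k] f) (-1) : ℤ) : ℝ) + ε = ((f (-1 - (k : ℤ)) : ℤ) : ℝ) + ε := by
    intro k _
    rw [shiftB_iterate]
  rw [Finset.sum_congr rfl h, Finset.sum_add_distrib, Finset.sum_const, ← sum_range_int_neg]
  push_cast
  simp [Finset.card_range, nsmul_eq_mul]

end PathAux

/-- Paths with some origin from which there are infinitely many nonnegative forward sums. -/
def recD : Set (ℤ → ℤ) :=
  {f | ∃ n : ℤ, ∀ b : ℤ, ∃ j : ℤ, b < j ∧ n < j ∧ 0 ≤ ∑ l ∈ Finset.Ico n j, f l}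

/-- Paths with some endpoint to which there are infinitely many nonnegative backward sums. -/
def recD' : Set (ℤ → ℤ) :=
  {f | ∃ p : ℤ, ∀ b : ℤ, ∃ j : ℤ, j < b ∧ j < p ∧ 0 ≤ ∑ l ∈ Finset.Ico j p, f l}

lemma measurable_sum_Ico (n j : ℤ) :
    Measurable (fun f : ℤ → ℤ => ∑ l ∈ Finset.Ico n j, f l) :=
  Finset.measurable_sum _ (fun l _ => measurable_pi_apply l)

lemma recD_measurable : MeasurableSet recD := by
  have h : recD = ⋃ n : ℤ, ⋂ b : ℤ, ⋃ j : ℤ,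
      {f : ℤ → ℤ | b < j ∧ n < j ∧ 0 ≤ ∑ l ∈ Finset.Ico n j, f l} := by
    ext f; simp [recD, Set.mem_iUnion, Set.mem_iInter]
  rw [h]
  refine MeasurableSet.iUnion fun n => MeasurableSet.iInter fun b => MeasurableSet.iUnion fun j => ?_
  by_cases hc : b < j ∧ n < j
  · have he : {f : ℤ → ℤ | b < j ∧ n < j ∧ 0 ≤ ∑ l ∈ Finset.Ico n j, f l}
        = (fun f : ℤ → ℤ => ∑ l ∈ Finset.Ico n j, f l) ⁻¹' {z : ℤ | 0 ≤ z} := by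
      ext f; simp [hc.1, hc.2]
    rw [he]
    exact measurable_sum_Ico n j (Set.to_countable _).measurableSet
  · have he : {f : ℤ → ℤ | b < j ∧ n < j ∧ 0 ≤ ∑ l ∈ Finset.Ico n j, f l} = ∅ := by
      ext f
      simp only [Set.mem_setOf_eq, Set.mem_empty_iff_false, iff_false]
      tauto
    rw [he]; exact MeasurableSet.empty

lemma recD'_measurable : MeasurableSet recD' := by
  have h : recD' = ⋃ p : ℤ, ⋂ b : ℤ, ⋃ j : ℤ,
      {f : ℤ → ℤ | j < b ∧ j < p ∧ 0 ≤ ∑ l ∈ Finset.Ico j p, f l} := by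
    ext f; simp [recD', Set.mem_iUnion, Set.mem_iInter]
  rw [h]
  refine MeasurableSet.iUnion fun p => MeasurableSet.iInter fun b => MeasurableSet.iUnion fun j => ?_
  by_cases hc : j < b ∧ j < p
  · have he : {f : ℤ → ℤ | j < b ∧ j < p ∧ 0 ≤ ∑ l ∈ Finset.Ico j p, f l}
        = (fun f : ℤ → ℤ => ∑ l ∈ Finset.Ico j p, f l) ⁻¹' {z : ℤ | 0 ≤ z} := by
      ext f; simp [hc.1, hc.2]
    rw [he]
    exact measurable_sum_Ico j p (Set.to_countable _).measurableSet
  · have he : {f : ℤ → ℤ | j < b ∧ j < p ∧ 0 ≤ ∑ l ∈ Finset.Ico j p, f l} = ∅ := by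
      ext f
      simp only [Set.mem_setOf_eq, Set.mem_empty_iff_false, iff_false]
      tauto
    rw [he]; exact MeasurableSet.empty

lemma sum_shiftF (f : ℤ → ℤ) (n j : ℤ) :
    ∑ l ∈ Finset.Ico n j, shiftF f l = ∑ l ∈ Finset.Ico (n + 1) (j + 1), f l :=
  Finset.sum_Ico_add' f n j 1

lemma recD_invariant : shiftF ⁻¹' recD = recD := by
  ext f
  simp only [Set.mem_preimage, recD, Set.mem_setOf_eq]
  constructor
  · rintro ⟨n, hn⟩
    refine ⟨n + 1, fun b => ?_⟩
    obtain ⟨j, h1, h2, h3⟩ := hn (b - 1)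
    rw [sum_shiftF] at h3
    exact ⟨j + 1, by omega, by omega, h3⟩
  · rintro ⟨n, hn⟩
    refine ⟨n - 1, fun b => ?_⟩
    obtain ⟨j, h1, h2, h3⟩ := hn (b + 1)
    refine ⟨j - 1, by omega, by omega, ?_⟩
    have e1 : n - 1 + 1 = n := by ring
    have e2 : j - 1 + 1 = j := by ring
    rw [sum_shiftF, e1, e2]
    exact h3

lemma recD'_invariant : shiftF ⁻¹' recD' = recD' := by
  ext f
  simp only [Set.mem_preimage, recD', Set.mem_setOf_eq]
  constructor
  · rintro ⟨p, hp⟩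
    refine ⟨p + 1, fun b => ?_⟩
    obtain ⟨j, h1, h2, h3⟩ := hp (b - 1)
    rw [sum_shiftF] at h3
    exact ⟨j + 1, by omega, by omega, h3⟩
  · rintro ⟨p, hp⟩
    refine ⟨p - 1, fun b => ?_⟩
    obtain ⟨j, h1, h2, h3⟩ := hp (b + 1)
    refine ⟨j - 1, by omega, by omega, ?_⟩
    have e1 : j - 1 + 1 = j := by ring
    have e2 : p - 1 + 1 = p := by ring
    rw [sum_shiftF, e1, e2]
    exact h3

lemma recD_subset (ε : ℝ) (hε : 0 < ε) :
    recD ⊆ {f : ℤ → ℤ | ∃ m : ℕ, 1 ≤ m ∧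
      0 ≤ bS shiftF (fun f => ((f 0 : ℤ) : ℝ) + ε) m f} := by
  rintro f ⟨n, hn⟩
  obtain ⟨c, hc⟩ : ∃ c : ℤ, ∀ j : ℤ, n < j → 0 < j → 0 ≤ ∑ l ∈ Finset.Ico n j, f l →
      c ≤ ∑ l ∈ Finset.Ico (0 : ℤ) j, f l := by
    rcases le_or_gt n 0 with hn0 | hn0
    · refine ⟨-∑ l ∈ Finset.Ico n (0 : ℤ), f l, fun j hj hj0 hs => ?_⟩
      have h := sum_Ico_split f hn0 hj0.le
      linarith
    · refine ⟨∑ l ∈ Finset.Ico (0 : ℤ) n, f l, fun j hj hj0 hs => ?_⟩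
      have h := sum_Ico_split f hn0.le hj.le
      linarith
  obtain ⟨N, hN⟩ := Archimedean.arch (-(c : ℝ)) hε
  obtain ⟨j, hbj, hnj, hsum⟩ := hn (max n (max 0 (N : ℤ)))
  have hj0 : (0 : ℤ) < j := lt_of_le_of_lt (le_max_of_le_right (le_max_left _ _)) hbj
  have hjN : (N : ℤ) < j := lt_of_le_of_lt (le_max_of_le_right (le_max_right _ _)) hbj
  refine ⟨j.toNat, by omega, ?_⟩
  rw [bS_shiftF]
  have hcast : ((j.toNat : ℕ) : ℤ) = j := Int.toNat_of_nonneg hj0.le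
  rw [hcast]
  have h1 : (c : ℝ) ≤ ((∑ l ∈ Finset.Ico (0 : ℤ) j, f l : ℤ) : ℝ) := by
    exact_mod_cast hc j hnj hj0 hsum
  have h2 : -(c : ℝ) ≤ (N : ℝ) * ε := by simpa [nsmul_eq_mul] using hN
  have h3 : (N : ℝ) ≤ (j.toNat : ℝ) := by
    have : N ≤ j.toNat := by omega
    exact_mod_cast this
  have h4 : (N : ℝ) * ε ≤ (j.toNat : ℝ) * ε := mul_le_mul_of_nonneg_right h3 hε.le
  linarith

lemma recD'_subset (ε : ℝ) (hε : 0 < ε) :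
    recD' ⊆ {f : ℤ → ℤ | ∃ m : ℕ, 1 ≤ m ∧
      0 ≤ bS shiftB (fun f => ((f (-1) : ℤ) : ℝ) + ε) m f} := by
  rintro f ⟨p, hp⟩
  obtain ⟨c, hc⟩ : ∃ c : ℤ, ∀ j : ℤ, j < p → j < 0 → 0 ≤ ∑ l ∈ Finset.Ico j p, f l →
      c ≤ ∑ l ∈ Finset.Ico j (0 : ℤ), f l := by
    rcases le_or_gt p 0 with hp0 | hp0
    · refine ⟨∑ l ∈ Finset.Ico p (0 : ℤ), f l, fun j hj hj0 hs => ?_⟩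
      have h := sum_Ico_split f hj.le hp0
      linarith
    · refine ⟨-∑ l ∈ Finset.Ico (0 : ℤ) p, f l, fun j hj hj0 hs => ?_⟩
      have h := sum_Ico_split f hj0.le hp0.le
      linarith
  obtain ⟨N, hN⟩ := Archimedean.arch (-(c : ℝ)) hε
  obtain ⟨j, hbj, hjp, hsum⟩ := hp (min p (min 0 (-(N : ℤ))))
  have hj0 : j < 0 := lt_of_lt_of_le hbj (le_trans (min_le_right _ _) (min_le_left _ _))
  have hjN : j < -(N : ℤ) := lt_of_lt_of_le hbj (le_trans (min_le_right _ _) (min_le_right _ _))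
  refine ⟨(-j).toNat, by omega, ?_⟩
  rw [bS_shiftB]
  have hcast : (((-j).toNat : ℕ) : ℤ) = -j := Int.toNat_of_nonneg (by omega)
  rw [hcast, neg_neg]
  have h1 : (c : ℝ) ≤ ((∑ l ∈ Finset.Ico j (0 : ℤ), f l : ℤ) : ℝ) := by
    exact_mod_cast hc j hjp hj0 hsum
  have h2 : -(c : ℝ) ≤ (N : ℝ) * ε := by simpa [nsmul_eq_mul] using hN
  have h3 : (N : ℝ) ≤ ((-j).toNat : ℝ) := by
    have : N ≤ (-j).toNat := by omega
    exact_mod_cast this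
  have h4 : (N : ℝ) * ε ≤ ((-j).toNat : ℝ) * ε := mul_le_mul_of_nonneg_right h3 hε.le
  linarith



/-- Phase transition, negative-mean phase: for a stationary ergodic integrable integer
sequence with `E[X_0] < 0`, almost surely every record component is finite. -/
theorem stationary_record_all_components_finite
    {Ω : Type*} [MeasureSpace Ω] [IsProbabilityMeasure (ℙ : Measure Ω)]
    (X : ℤ → Ω → ℤ) (hmeas : ∀ n, Measurable (X n))
    (hstat : ∀ k : ℤ, Measure.map (fun ω => fun n : ℤ => X (n + k) ω) ℙ =
      Measure.map (fun ω => fun n : ℤ => X n ω) ℙ)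
    (herg : ∀ A : Set (ℤ → ℤ), MeasurableSet A →
      (fun f : ℤ → ℤ => fun n : ℤ => f (n + 1)) ⁻¹' A = A →
      Measure.map (fun ω => fun n : ℤ => X n ω) ℙ A = 0 ∨
        Measure.map (fun ω => fun n : ℤ => X n ω) ℙ A = 1)
    (hint : Integrable (fun ω => (X 0 ω : ℝ)) ℙ)
    (hmean : ∫ ω, (X 0 ω : ℝ) ∂ℙ < 0) :
    ∀ᵐ ω ∂ℙ, ∀ i : ℤ,
      {j : ℤ | ∃ a b : ℕ,
        (recordMap (fun l => X l ω))^[a] j = (recordMap (fun l => X l ω))^[b] i}.Finite := by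
  have hXm : Measurable (fun ω => fun n : ℤ => X n ω) := measurable_pi_lambda _ hmeas
  set ν : Measure (ℤ → ℤ) := Measure.map (fun ω => fun n : ℤ => X n ω) ℙ with hν
  have hνprob : IsProbabilityMeasure ν := Measure.isProbabilityMeasure_map hXm.aemeasurable
  -- the shifts preserve ν
  have hTpres : MeasurePreserving shiftF ν ν := by
    refine ⟨shiftF_measurable, ?_⟩
    rw [hν, Measure.map_map shiftF_measurable hXm]
    exact hstat 1
  have hBpres : MeasurePreserving shiftB ν ν := by
    refine ⟨shiftB_measurable, ?_⟩
    rw [hν, Measure.map_map shiftB_measurable hXm]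
    have he : (shiftB ∘ fun ω => fun n : ℤ => X n ω) = fun ω => fun n : ℤ => X (n + (-1)) ω := by
      funext ω n
      simp [shiftB, sub_eq_add_neg]
    rw [he]
    exact hstat (-1)
  -- coordinate functions
  have hg0m : Measurable (fun f : ℤ → ℤ => ((f 0 : ℤ) : ℝ)) :=
    measurable_from_top.comp (measurable_pi_apply 0)
  have hg1m : Measurable (fun f : ℤ → ℤ => ((f (-1) : ℤ) : ℝ)) :=
    measurable_from_top.comp (measurable_pi_apply (-1))
  have hg0i : Integrable (fun f : ℤ → ℤ => ((f 0 : ℤ) : ℝ)) ν := by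
    rw [hν, integrable_map_measure hg0m.aestronglyMeasurable hXm.aemeasurable]
    exact hint
  have hg0int : ∫ f, ((f 0 : ℤ) : ℝ) ∂ν = ∫ ω, (X 0 ω : ℝ) ∂ℙ := by
    rw [hν, integral_map hXm.aemeasurable hg0m.aestronglyMeasurable]
  have hφm : Measurable (fun ω => fun n : ℤ => X (n + (-1)) ω) :=
    measurable_pi_lambda _ (fun n => hmeas _)
  have hmapφ : Measure.map (fun ω => fun n : ℤ => X (n + (-1)) ω) ℙ = ν := hstat (-1)
  have hXn1i : Integrable (fun ω => (X (-1) ω : ℝ)) ℙ := by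
    have h2 : Integrable (fun f : ℤ → ℤ => ((f 0 : ℤ) : ℝ))
        (Measure.map (fun ω => fun n : ℤ => X (n + (-1)) ω) ℙ) := by
      rw [hmapφ]; exact hg0i
    have h3 := (integrable_map_measure hg0m.aestronglyMeasurable hφm.aemeasurable).mp h2
    have he : ((fun f : ℤ → ℤ => ((f 0 : ℤ) : ℝ)) ∘ (fun ω => fun n : ℤ => X (n + (-1)) ω))
        = fun ω => (X (-1) ω : ℝ) := by
      funext ω
      norm_num
    rwa [he] at h3
  have hXn1int : ∫ ω, (X (-1) ω : ℝ) ∂ℙ = ∫ ω, (X 0 ω : ℝ) ∂ℙ := by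
    have h4 := integral_map (μ := ℙ) hφm.aemeasurable hg0m.aestronglyMeasurable
    rw [hmapφ, hg0int] at h4
    simpa using h4.symm
  have hg1i : Integrable (fun f : ℤ → ℤ => ((f (-1) : ℤ) : ℝ)) ν := by
    rw [hν, integrable_map_measure hg1m.aestronglyMeasurable hXm.aemeasurable]
    exact hXn1i
  have hg1int : ∫ f, ((f (-1) : ℤ) : ℝ) ∂ν = ∫ ω, (X 0 ω : ℝ) ∂ℙ := by
    rw [hν, integral_map hXm.aemeasurable hg1m.aestronglyMeasurable]
    exact hXn1int
  -- choose ε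
  set ε : ℝ := -(∫ ω, (X 0 ω : ℝ) ∂ℙ) / 2 with hεdef
  have hε : 0 < ε := by rw [hεdef]; linarith
  have hmue : ∫ ω, (X 0 ω : ℝ) ∂ℙ + ε < 0 := by rw [hεdef]; linarith
  -- measurability of the maximal sets
  have hMsetm : ∀ (σ : (ℤ → ℤ) → (ℤ → ℤ)), Measurable σ → ∀ g : (ℤ → ℤ) → ℝ, Measurable g →
      MeasurableSet {f : ℤ → ℤ | ∃ m : ℕ, 1 ≤ m ∧ 0 ≤ bS σ g m f} := by
    intro σ hσ g hg
    have h : {f : ℤ → ℤ | ∃ m : ℕ, 1 ≤ m ∧ 0 ≤ bS σ g m f}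
        = ⋃ m : ℕ, {f : ℤ → ℤ | 1 ≤ m ∧ 0 ≤ bS σ g m f} := by
      ext f; simp [Set.mem_iUnion]
    rw [h]
    refine MeasurableSet.iUnion fun m => ?_
    by_cases h1 : 1 ≤ m
    · have he : {f : ℤ → ℤ | 1 ≤ m ∧ 0 ≤ bS σ g m f} = (bS σ g m) ⁻¹' (Set.Ici 0) := by
        ext f; simp [h1]
      rw [he]
      exact (bS_measurable σ g hσ hg m) measurableSet_Ici
    · have he : {f : ℤ → ℤ | 1 ≤ m ∧ 0 ≤ bS σ g m f} = ∅ := by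
        ext f; simp [h1]
      rw [he]; exact MeasurableSet.empty
  -- generic nullity argument
  have hnull : ∀ (σ : (ℤ → ℤ) → (ℤ → ℤ)) (hσm : Measurable σ)
      (hσp : MeasurePreserving σ ν ν) (g : (ℤ → ℤ) → ℝ) (hgm : Measurable g)
      (hgi : Integrable g ν), (∫ f, g f ∂ν < 0) → ∀ (Dset : Set (ℤ → ℤ)),
      MeasurableSet Dset → Dset ⊆ {f : ℤ → ℤ | ∃ m : ℕ, 1 ≤ m ∧ 0 ≤ bS σ g m f} →
      (ν Dset = 0 ∨ ν Dset = 1) → ν Dset = 0 := by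
    intro σ hσm hσp g hgm hgi hgneg Dset hDm hsub hergD
    rcases hergD with h | h
    · exact h
    · exfalso
      have hMm := hMsetm σ hσm g hgm
      have hfull : ν {f : ℤ → ℤ | ∃ m : ℕ, 1 ≤ m ∧ 0 ≤ bS σ g m f} = 1 :=
        le_antisymm prob_le_one (h ▸ measure_mono hsub)
      have hc0 : ν {f : ℤ → ℤ | ∃ m : ℕ, 1 ≤ m ∧ 0 ≤ bS σ g m f}ᶜ = 0 := by
        rw [measure_compl hMm (measure_ne_top ν _), hfull, measure_univ]
        simp
      have hpos := maximal_ergodic σ g hσm hσp hgm hgi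
      have heq : ∫ f in {f : ℤ → ℤ | ∃ m : ℕ, 1 ≤ m ∧ 0 ≤ bS σ g m f}, g f ∂ν
          = ∫ f, g f ∂ν := by
        rw [← integral_add_compl hMm hgi, setIntegral_measure_zero _ hc0, add_zero]
      rw [heq] at hpos
      linarith
  -- the two bad events are null
  have hG0neg : ∫ f, (((f 0 : ℤ) : ℝ) + ε) ∂ν < 0 := by
    rw [integral_add hg0i (integrable_const ε), integral_const, probReal_univ]
    simp only [ENNReal.toReal_one, one_smul, smul_eq_mul, one_mul]
    rw [hg0int]
    exact hmue
  have hG1neg : ∫ f, (((f (-1) : ℤ) : ℝ) + ε) ∂ν < 0 := by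
    rw [integral_add hg1i (integrable_const ε), integral_const, probReal_univ]
    simp only [ENNReal.toReal_one, one_smul, smul_eq_mul, one_mul]
    rw [hg1int]
    exact hmue
  have hνD : ν recD = 0 :=
    hnull shiftF shiftF_measurable hTpres _ (hg0m.add_const ε) (hg0i.add (integrable_const ε)) hG0neg
      recD recD_measurable (recD_subset ε hε) (herg recD recD_measurable recD_invariant)
  have hνD' : ν recD' = 0 :=
    hnull shiftB shiftB_measurable hBpres _ (hg1m.add_const ε) (hg1i.add (integrable_const ε)) hG1neg
      recD' recD'_measurable (recD'_subset ε hε) (herg recD' recD'_measurable recD'_invariant)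
  -- pull back to Ω
  have hBadm : MeasurableSet (recD ∪ recD') := recD_measurable.union recD'_measurable
  have hpre : ℙ ((fun ω => fun n : ℤ => X n ω) ⁻¹' (recD ∪ recD')) = 0 := by
    rw [← Measure.map_apply hXm hBadm, ← hν]
    exact measure_union_null hνD hνD'
  have hae : ∀ᵐ ω ∂ℙ, (fun n : ℤ => X n ω) ∉ recD ∪ recD' := by
    rw [ae_iff]
    have he : {ω | ¬ (fun n : ℤ => X n ω) ∉ recD ∪ recD'}
        = (fun ω => fun n : ℤ => X n ω) ⁻¹' (recD ∪ recD') := by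
      ext ω
      simp only [Set.mem_setOf_eq, Set.mem_preimage, Set.mem_union, not_not]
    rw [he]
    exact hpre
  filter_upwards [hae] with ω hω i
  have hωD : ¬ ∃ n : ℤ, ∀ b : ℤ, ∃ j : ℤ, b < j ∧ n < j ∧ 0 ≤ ∑ l ∈ Finset.Ico n j, X l ω :=
    fun hh => hω (Or.inl hh)
  have hωD' : ¬ ∃ p : ℤ, ∀ b : ℤ, ∃ j : ℤ, j < b ∧ j < p ∧ 0 ≤ ∑ l ∈ Finset.Ico j p, X l ω :=
    fun hh => hω (Or.inr hh)
  push_neg at hωD hωD'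
  refine component_finite (fun l => X l ω) i ?_ ?_
  · obtain ⟨b, hb⟩ := hωD i
    apply (Set.finite_Ioc i b).subset
    rintro j ⟨hij, hs⟩
    refine ⟨hij, ?_⟩
    by_contra hbj
    push_neg at hbj
    exact absurd hs (by simpa using hb j hbj hij)
  · intro p
    obtain ⟨b, hb⟩ := hωD' p
    apply (Set.finite_Ico b p).subset
    rintro j ⟨hjp, hs⟩
    refine ⟨?_, hjp⟩
    by_contra hbj
    push_neg at hbj
    exact absurd hs (by simpa using hb j hbj hjp)
  done
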